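/- arXiv:2404.17812 — 5 statements merged into one kernel-verified Lean document; each statement's English description precedes it below -/
import Mathlib

section
/- Let K : ℝ → ℝ be integrable with Fourier transform φ_K supported in [−M₀, M₀] for some M₀ > 0. Let φ_ε : ℝ → ℂ be continuous and nowhere vanishing, and suppose there are constants d₀ > 0, β > 0, γ > 0, β₀ ∈ ℝ and M > 0 such that |φ_ε(t)| ≥ d₀ |t|^{β₀} exp(−|t|^β/γ) for all |t| ≥ M. For n ≥ 2 set h_n = c (log n)^{−1/β} with a constant c > M₀ (2/γ)^{1/β}. Then n⁻¹ · (sup_{x ∈ ℝ} |K_{h_n}(x)|)² → 0 as n → ∞. -/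
/-!
Since `‖φ_K‖_∞ ≤ ‖K‖₁` and `φ_K` vanishes off `[-M₀, M₀]`, `sup_x |K_h x| ≤ M₀ ‖K‖₁ / (π D)`,
where `D` bounds `|φ_ε|` from below on `[-M₀/h, M₀/h]`. Compactness of `[-M, M]` and the
supersmooth lower bound give such a `D` of order `T^β₀ exp (-T^β/γ)`, where
`T = M₀/h_n = (M₀/c) (log n)^{1/β}`. Hence `D⁻²` is at most a power of `log n` times `n^r` with
`r = 2 (M₀/c)^β / γ`, and the choice of `c` is exactly `r < 1`, so `n⁻¹ D⁻² → 0`.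
-/

open MeasureTheory Filter Set Topology

lemma norm_integral_exp_mul_le_integral_norm (K : ℝ → ℝ) (t : ℝ) :
    ‖∫ x : ℝ, Complex.exp (Complex.I * t * x) * K x‖ ≤ ∫ x : ℝ, ‖K x‖ := by
  refine (norm_integral_le_integral_norm _).trans_eq (integral_congr_ae (.of_forall fun x => ?_))
  simp [Complex.norm_exp]

lemma norm_deconvolutionKernel_le {ψ φ : ℝ → ℂ} {M₀ C D h : ℝ} (hM₀ : 0 ≤ M₀) (hh : 0 < h)
    (hD : 0 < D) (hψ : ∀ t, ‖ψ t‖ ≤ C) (hsupp : ∀ t, M₀ < |t| → ψ t = 0)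
    (hφ : ∀ s, |s| ≤ M₀ / h → D ≤ ‖φ s‖) (x : ℝ) :
    ‖((2 * Real.pi : ℝ) : ℂ)⁻¹ * ∫ t : ℝ, Complex.exp (-(Complex.I * t * x)) * ψ t / φ (t / h)‖
      ≤ M₀ * C / (Real.pi * D) := by
  have hC : 0 ≤ C := (norm_nonneg _).trans (hψ 0)
  have hint : ‖∫ t : ℝ, Complex.exp (-(Complex.I * t * x)) * ψ t / φ (t / h)‖
      ≤ C / D * (2 * M₀) := by
    rw [← setIntegral_eq_integral_of_forall_compl_eq_zero (s := Icc (-M₀) M₀) fun t ht => by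
      rw [hsupp t (by rw [mem_Icc, ← abs_le, not_le] at ht; exact ht)]; simp]
    refine (norm_setIntegral_le_of_norm_le_const (C := C / D) measure_Icc_lt_top
      fun t ht => ?_).trans_eq ?_
    · rw [norm_div, norm_mul, Complex.norm_exp]
      simp only [Complex.neg_re, Complex.mul_re, Complex.I_re, Complex.I_im, Complex.ofReal_re,
        Complex.ofReal_im]
      refine div_le_div₀ hC (by simpa using hψ t) hD (hφ _ ?_)
      rw [abs_div, abs_of_pos hh]
      gcongr
      exact abs_le.2 ht
    · rw [Real.volume_real_Icc, max_eq_left (by linarith)]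
      ring
  rw [norm_mul, norm_inv, Complex.norm_real, Real.norm_of_nonneg (by positivity)]
  calc (2 * Real.pi)⁻¹ * ‖∫ t : ℝ, Complex.exp (-(Complex.I * t * x)) * ψ t / φ (t / h)‖
      ≤ (2 * Real.pi)⁻¹ * (C / D * (2 * M₀)) := by gcongr
    _ = M₀ * C / (Real.pi * D) := by field_simp

lemma tendsto_inv_mul_log_rpow_mul_exp (q : ℝ) {r : ℝ} (hr : r < 1) :
    Tendsto (fun n : ℕ => (n : ℝ)⁻¹ * Real.log n ^ q * Real.exp (r * Real.log n))
      atTop (𝓝 0) := by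
  have hlog : Tendsto (fun n : ℕ => Real.log n) atTop atTop :=
    Real.tendsto_log_atTop.comp tendsto_natCast_atTop_atTop
  refine ((tendsto_rpow_mul_exp_neg_mul_atTop_nhds_zero q (1 - r) (by linarith)).comp hlog).congr'
    ?_
  filter_upwards [eventually_ge_atTop 1] with n hn
  have hn0 : (0 : ℝ) < n := by exact_mod_cast hn
  rw [Function.comp_apply, show -(1 - r) * Real.log n = r * Real.log n - Real.log n by ring,
    Real.exp_sub, Real.exp_log hn0]
  ring

lemma inv_min_sq_le {a b : ℝ} (ha : 0 < a) (hb : 0 < b) :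
    (min a b)⁻¹ ^ 2 ≤ a⁻¹ ^ 2 + b⁻¹ ^ 2 := by
  rcases min_choice a b with h | h <;> rw [h]
  · exact le_add_of_nonneg_right (by positivity)
  · exact le_add_of_nonneg_left (by positivity)

lemma inv_rpow_sq {x : ℝ} (hx : 0 ≤ x) (b : ℝ) : (x ^ b)⁻¹ ^ 2 = x ^ (-(2 * b)) := by
  rw [← Real.rpow_neg hx, ← Real.rpow_mul_natCast hx]
  ring_nf

lemma div_rpow_lt_half_of_mul_rpow_lt {M₀ c β γ : ℝ} (hM₀ : 0 < M₀) (hβ : 0 < β) (hγ : 0 < γ)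
    (hM₀c : M₀ * (2 / γ) ^ (1 / β) < c) : (M₀ / c) ^ β < γ / 2 := by
  have hc : 0 < c := lt_of_le_of_lt (by positivity) hM₀c
  have hinv : (γ / 2) ^ β⁻¹ = ((2 / γ) ^ (1 / β))⁻¹ := by
    rw [← inv_div, Real.inv_rpow (by positivity), one_div]
  rw [← Real.lt_rpow_inv_iff_of_pos (by positivity) (by positivity) hβ, hinv,
    lt_inv_comm₀ (by positivity) (by positivity), inv_div, lt_div_iff₀' hM₀]
  exact hM₀c

section SupersmoothFloor

variable (d₀ β₀ β γ M : ℝ)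

/-- A lower bound for `d₀ |t| ^ β₀ exp (-|t| ^ β / γ)` on `M ≤ |t| ≤ T`. -/
noncomputable def supersmoothFloor (T : ℝ) : ℝ :=
  d₀ * min (M ^ β₀) (T ^ β₀) * Real.exp (-(T ^ β) / γ)

variable {d₀ β₀ β γ M}

lemma supersmoothFloor_pos {T : ℝ} (hd₀ : 0 < d₀) (hM : 0 < M) (hT : 0 < T) :
    0 < supersmoothFloor d₀ β₀ β γ M T := by
  unfold supersmoothFloor
  have := lt_min (Real.rpow_pos_of_pos hM β₀) (Real.rpow_pos_of_pos hT β₀)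
  positivity

lemma min_rpow_le_rpow {s T : ℝ} (hM : 0 < M) (hMs : M ≤ s) (hsT : s ≤ T) (b : ℝ) :
    min (M ^ b) (T ^ b) ≤ s ^ b := by
  rcases le_total 0 b with hb | hb
  · exact (min_le_left _ _).trans (Real.rpow_le_rpow hM.le hMs hb)
  · exact (min_le_right _ _).trans (Real.rpow_le_rpow_of_nonpos (hM.trans_le hMs) hsT hb)

lemma min_supersmoothFloor_le_norm {φ : ℝ → ℂ} {m T s : ℝ} (hd₀ : 0 ≤ d₀) (hβ : 0 ≤ β)
    (hγ : 0 ≤ γ) (hM : 0 < M) (hm : ∀ s ∈ Icc (-M) M, m ≤ ‖φ s‖)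
    (hlow : ∀ t : ℝ, M ≤ |t| → d₀ * |t| ^ β₀ * Real.exp (-(|t| ^ β) / γ) ≤ ‖φ t‖)
    (hs : |s| ≤ T) : min m (supersmoothFloor d₀ β₀ β γ M T) ≤ ‖φ s‖ := by
  rcases le_or_gt |s| M with hsM | hMs
  · exact (min_le_left _ _).trans (hm s (abs_le.1 hsM))
  · refine (min_le_right _ _).trans (le_trans ?_ (hlow s hMs.le))
    unfold supersmoothFloor
    gcongr
    exact min_rpow_le_rpow hM hMs.le hs β₀

lemma tendsto_inv_mul_inv_min_supersmoothFloor_sq {m A : ℝ} (hm : 0 < m) (hd₀ : 0 < d₀)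
    (hM : 0 < M) (hA : 0 < A) (hβ : 0 < β) (hγ : 0 < γ) (hAβ : A ^ β < γ / 2) :
    Tendsto (fun n : ℕ => (n : ℝ)⁻¹ *
      (min m (supersmoothFloor d₀ β₀ β γ M (A * Real.log n ^ (1 / β))))⁻¹ ^ 2) atTop (𝓝 0) := by
  set r := 2 * A ^ β / γ with hr_def
  have hr : r < 1 := by rw [div_lt_one hγ]; linarith
  set q := -(2 * β₀) / β with hq_def
  have hlim := (((((tendsto_inv_mul_log_rpow_mul_exp 0 hr).const_mul (M ^ (-(2 * β₀)))).add
    ((tendsto_inv_mul_log_rpow_mul_exp q hr).const_mul (A ^ (-(2 * β₀))))).const_mul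
      (d₀⁻¹ ^ 2)).add ((tendsto_inv_atTop_zero.comp tendsto_natCast_atTop_atTop).const_mul
        (m⁻¹ ^ 2)))
  simp only [mul_zero, add_zero] at hlim
  refine squeeze_zero' (.of_forall fun n => by positivity) ?_ hlim
  filter_upwards [eventually_ge_atTop 2] with n hn
  set L := Real.log n
  have hL : 0 < L := Real.log_pos (by exact_mod_cast hn)
  set T := A * L ^ (1 / β)
  have hT : 0 < T := by positivity
  have hTβ : T ^ β = A ^ β * L := by
    rw [Real.mul_rpow hA.le (by positivity), ← Real.rpow_mul hL.le, one_div_mul_cancel hβ.ne',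
      Real.rpow_one]
  have hTβ₀ : (T ^ β₀)⁻¹ ^ 2 = A ^ (-(2 * β₀)) * L ^ q := by
    rw [inv_rpow_sq hT.le, Real.mul_rpow hA.le (by positivity), ← Real.rpow_mul hL.le, hq_def]
    ring_nf
  have hexp : (Real.exp (-(T ^ β) / γ))⁻¹ ^ 2 = Real.exp (r * L) := by
    rw [← Real.exp_neg, ← Real.exp_nat_mul, hTβ, hr_def]
    ring_nf
  have hfloor : (supersmoothFloor d₀ β₀ β γ M T)⁻¹ ^ 2
      = d₀⁻¹ ^ 2 * (min (M ^ β₀) (T ^ β₀))⁻¹ ^ 2 * Real.exp (r * L) := by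
    rw [supersmoothFloor, ← hexp]
    ring
  calc (n : ℝ)⁻¹ * (min m (supersmoothFloor d₀ β₀ β γ M T))⁻¹ ^ 2
      ≤ (n : ℝ)⁻¹ * (m⁻¹ ^ 2 + (supersmoothFloor d₀ β₀ β γ M T)⁻¹ ^ 2) := by
        gcongr
        exact inv_min_sq_le hm (supersmoothFloor_pos hd₀ hM hT)
    _ ≤ (n : ℝ)⁻¹ *
          (m⁻¹ ^ 2 + d₀⁻¹ ^ 2 * ((M ^ β₀)⁻¹ ^ 2 + (T ^ β₀)⁻¹ ^ 2) * Real.exp (r * L)) := by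
        rw [hfloor]
        gcongr
        exact inv_min_sq_le (by positivity) (by positivity)
    _ = _ := by
        rw [inv_rpow_sq hM.le, hTβ₀, Real.rpow_zero, Function.comp_apply]
        ring

end SupersmoothFloor

theorem stmt_3_general (K : ℝ → ℝ)
    (φK : ℝ → ℂ) (hφK : ∀ t : ℝ, φK t = ∫ x : ℝ, Complex.exp (Complex.I * t * x) * K x)
    (M₀ : ℝ) (hM₀ : 0 < M₀) (hsupp : ∀ t : ℝ, M₀ < |t| → φK t = 0)
    (φε : ℝ → ℂ) (hφεc : Continuous φε) (hφε0 : ∀ t, φε t ≠ 0)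
    (d₀ β γ : ℝ) (hd₀ : 0 < d₀) (hβ : 0 < β) (hγ : 0 < γ) (β₀ M : ℝ) (hM : 0 < M)
    (hlow : ∀ t : ℝ, M ≤ |t| → d₀ * |t| ^ β₀ * Real.exp (-(|t| ^ β) / γ) ≤ ‖φε t‖)
    (c : ℝ) (hc : M₀ * (2 / γ) ^ (1 / β) < c)
    (h : ℕ → ℝ) (hh : ∀ n : ℕ, 2 ≤ n → h n = c * Real.log n ^ (-(1 / β)))
    (Kh : ℕ → ℝ → ℂ)
    (hKh : ∀ (n : ℕ) (x : ℝ), Kh n x =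
      ((2 * Real.pi : ℝ) : ℂ)⁻¹ *
        ∫ t : ℝ, Complex.exp (-(Complex.I * t * x)) * φK t / φε (t / h n)) :
    Tendsto (fun n : ℕ => (n : ℝ)⁻¹ * (⨆ x : ℝ, ‖Kh n x‖) ^ 2) atTop (nhds 0) := by
  obtain ⟨m, hm, hmφ⟩ := (isCompact_Icc (a := -M) (b := M)).exists_forall_le' (a := 0)
    hφεc.norm.continuousOn fun s _ => norm_pos_iff.2 (hφε0 s)
  have hc0 : 0 < c := lt_of_le_of_lt (by positivity) hc
  have hA : 0 < M₀ / c := by positivity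
  set D : ℕ → ℝ := fun n =>
    min m (supersmoothFloor d₀ β₀ β γ M (M₀ / c * Real.log n ^ (1 / β)))
  set C₀ := ∫ x : ℝ, ‖K x‖
  have hlim := (tendsto_inv_mul_inv_min_supersmoothFloor_sq (β₀ := β₀) hm hd₀ hM hA hβ hγ
    (div_rpow_lt_half_of_mul_rpow_lt hM₀ hβ hγ hc)).const_mul ((M₀ * C₀ / Real.pi) ^ 2)
  rw [mul_zero] at hlim
  refine squeeze_zero' (.of_forall fun n => by positivity) ?_ hlim
  filter_upwards [eventually_ge_atTop 2] with n hn
  have hL : 0 < Real.log n := Real.log_pos (by exact_mod_cast hn)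
  have hhn : 0 < h n := by rw [hh n hn]; positivity
  have hT : M₀ / h n = M₀ / c * Real.log n ^ (1 / β) := by
    rw [hh n hn, Real.rpow_neg hL.le]
    field_simp
  have hD : 0 < D n := lt_min hm (supersmoothFloor_pos hd₀ hM (by positivity))
  have hsup : ⨆ x : ℝ, ‖Kh n x‖ ≤ M₀ * C₀ / (Real.pi * D n) := by
    refine Real.iSup_le (fun x => ?_) (by positivity)
    rw [hKh]
    refine norm_deconvolutionKernel_le hM₀.le hhn hD (fun t => ?_) hsupp (fun s hs => ?_) x
    · rw [hφK]
      exact norm_integral_exp_mul_le_integral_norm K t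
    · exact min_supersmoothFloor_le_norm hd₀.le hβ.le hγ.le hM hmφ hlow (hs.trans hT.le)
  calc (n : ℝ)⁻¹ * (⨆ x : ℝ, ‖Kh n x‖) ^ 2
      ≤ (n : ℝ)⁻¹ * (M₀ * C₀ / (Real.pi * D n)) ^ 2 := by
        gcongr
        exact Real.iSup_nonneg fun x => norm_nonneg _
    _ = (M₀ * C₀ / Real.pi) ^ 2 * ((n : ℝ)⁻¹ * (D n)⁻¹ ^ 2) := by ring

/-- Let `K` be integrable with Fourier transform `φ_K` supported in
`[−M₀, M₀]`, let `φ_ε` be continuous, nowhere vanishing, with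
`|φ_ε(t)| ≥ d₀ |t|^{β₀} exp(−|t|^β/γ)` for `|t| ≥ M`. With bandwidth
`h_n = c (log n)^{−1/β}`, `c > M₀ (2/γ)^{1/β}`, the deconvolution kernel
`K_h(x) = (2π)⁻¹ ∫ exp(−itx) φ_K(t)/φ_ε(t/h) dt` satisfies
`n⁻¹ (sup_x |K_{h_n}(x)|)² → 0`. -/
theorem stmt_3 (K : ℝ → ℝ) (hK : Integrable K)
    (φK : ℝ → ℂ) (hφK : ∀ t : ℝ, φK t = ∫ x : ℝ, Complex.exp (Complex.I * t * x) * K x)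
    (M₀ : ℝ) (hM₀ : 0 < M₀) (hsupp : ∀ t : ℝ, M₀ < |t| → φK t = 0)
    (φε : ℝ → ℂ) (hφεc : Continuous φε) (hφε0 : ∀ t, φε t ≠ 0)
    (d₀ β γ : ℝ) (hd₀ : 0 < d₀) (hβ : 0 < β) (hγ : 0 < γ) (β₀ M : ℝ) (hM : 0 < M)
    (hlow : ∀ t : ℝ, M ≤ |t| → d₀ * |t| ^ β₀ * Real.exp (-(|t| ^ β) / γ) ≤ ‖φε t‖)
    (c : ℝ) (hc : M₀ * (2 / γ) ^ (1 / β) < c)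
    (h : ℕ → ℝ) (hh : ∀ n : ℕ, 2 ≤ n → h n = c * Real.log n ^ (-(1 / β)))
    (Kh : ℕ → ℝ → ℂ)
    (hKh : ∀ (n : ℕ) (x : ℝ), Kh n x =
      ((2 * Real.pi : ℝ) : ℂ)⁻¹ *
        ∫ t : ℝ, Complex.exp (-(Complex.I * t * x)) * φK t / φε (t / h n)) :
    Tendsto (fun n : ℕ => (n : ℝ)⁻¹ * (⨆ x : ℝ, ‖Kh n x‖) ^ 2) atTop (nhds 0) :=
  stmt_3_general K φK hφK M₀ hM₀ hsupp φε hφεc hφε0 d₀ β γ hd₀ hβ hγ β₀ M hM hlow c hc h hh Kh hKh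
end

section
/- Let (X, Z) be real random variables with E[|Z|] < ∞, let ε be a real random variable independent of the pair (X, Z), let Y = X + ε, and let φ_ε(t) = E[exp(itε)] be nowhere vanishing. Let K : ℝ → ℝ be continuous and integrable with integrable Fourier transform φ_K, let h > 0, and assume t ↦ φ_K(th)/φ_ε(t) is integrable. Then for every x ∈ ℝ: (2π)⁻¹ ∫_ℝ exp(−itx) φ_K(th) E[Z exp(itY)]/φ_ε(t) dt = h⁻¹ E[Z K((x − X)/h)]. -/
/-!
Independence factors `E[Z e^{itY}] = E[Z e^{itX}] φ_ε(t)`, so `φ_ε` cancels from the integrand.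
What remains is dominated by `|φ_K(th)| |Z|`, so Fubini lets one integrate in `t` first, and
Fourier inversion of `K` at scale `h` turns the inner integral into `2π h⁻¹ K((x - X)/h)`.
-/

open MeasureTheory ProbabilityTheory Complex
open scoped FourierTransform

theorem Real.fourier_neg_div_two_pi_eq_integral (f : ℝ → ℂ) (t : ℝ) :
    𝓕 f (-(t / (2 * Real.pi))) = ∫ x : ℝ, cexp (I * t * x) * f x := by
  rw [Real.fourier_real_eq_integral_exp_smul]
  congr 1 with x
  rw [smul_eq_mul]
  congr 2
  push_cast
  field_simp

theorem integral_cexp_neg_mul_integral_cexp_mul {f : ℝ → ℂ} (hfc : Continuous f)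
    (hf : Integrable f) (hφ : Integrable fun t : ℝ => ∫ x : ℝ, cexp (I * t * x) * f x)
    (u : ℝ) :
    ∫ t : ℝ, cexp (-(I * t * u)) * ∫ x : ℝ, cexp (I * t * x) * f x
      = (2 * Real.pi : ℂ) * f u := by
  have hπ : (0 : ℝ) < 2 * Real.pi := by positivity
  have hF : 𝓕 f = fun s =>
      ∫ x : ℝ, cexp (I * ((-(2 * Real.pi) * s : ℝ) : ℂ) * x) * f x := by
    ext s
    rw [← Real.fourier_neg_div_two_pi_eq_integral]
    field_simp
  have hFint : Integrable (𝓕 f) := by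
    rw [hF]
    exact hφ.comp_mul_left' (neg_ne_zero.mpr hπ.ne')
  have hinv := hf.fourierInv_fourier_eq hFint hfc.continuousAt (v := u)
  rw [Real.fourierInv_eq_fourier_neg, Real.fourier_real_eq_integral_exp_smul, hF] at hinv
  -- `𝓕⁻ g u = ∫ e^{2πisu} g(s) ds` is our inversion integral after substituting `t = -2πs`.
  have hcv := Measure.integral_comp_mul_left
    (fun t : ℝ => cexp (-(I * t * u)) * ∫ x : ℝ, cexp (I * t * x) * f x) (-(2 * Real.pi))
  rw [abs_inv, abs_neg, abs_of_pos hπ] at hcv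
  have hsub : ∫ s : ℝ, cexp (↑(-2 * Real.pi * s * -u) * I) •
      (fun s => ∫ x : ℝ, cexp (I * ((-(2 * Real.pi) * s : ℝ) : ℂ) * x) * f x) s
      = ∫ s : ℝ, cexp (-(I * ((-(2 * Real.pi) * s : ℝ) : ℂ) * u)) *
          ∫ x : ℝ, cexp (I * ((-(2 * Real.pi) * s : ℝ) : ℂ) * x) * f x := by
    congr 1 with s
    rw [smul_eq_mul]
    congr 2
    push_cast
    ring
  rw [← hinv, hsub, hcv, real_smul, ← mul_assoc]
  push_cast
  rw [mul_inv_cancel₀ (by exact_mod_cast hπ.ne'), one_mul]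

theorem integral_cexp_neg_mul_integral_cexp_mul_comp_mul_right {f : ℝ → ℂ}
    (hfc : Continuous f) (hf : Integrable f)
    (hφ : Integrable fun t : ℝ => ∫ x : ℝ, cexp (I * t * x) * f x)
    {h : ℝ} (hh : 0 < h) (u : ℝ) :
    ∫ t : ℝ, cexp (-(I * t * u)) * ∫ x : ℝ, cexp (I * (t * h : ℝ) * x) * f x
      = (2 * Real.pi / h : ℂ) * f (u / h) := by
  have hcv := Measure.integral_comp_mul_right
    (fun s : ℝ => cexp (-(I * s * (u / h : ℝ))) * ∫ x : ℝ, cexp (I * s * x) * f x) h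
  rw [integral_cexp_neg_mul_integral_cexp_mul hfc hf hφ, abs_of_pos (inv_pos.mpr hh)] at hcv
  have hh' : (h : ℂ) ≠ 0 := ofReal_ne_zero.mpr hh.ne'
  calc ∫ t : ℝ, cexp (-(I * t * u)) * ∫ x : ℝ, cexp (I * (t * h : ℝ) * x) * f x
      = ∫ t : ℝ, cexp (-(I * (t * h : ℝ) * (u / h : ℝ))) *
          ∫ x : ℝ, cexp (I * (t * h : ℝ) * x) * f x := by
        congr 1 with t
        congr 3
        push_cast
        field_simp
    _ = (2 * Real.pi / h : ℂ) * f (u / h) := by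
        rw [hcv, real_smul]
        push_cast
        ring

theorem integral_mul_cexp_add_of_indepFun {Ω : Type*} [MeasurableSpace Ω] {μ : Measure Ω}
    {X Z ε : Ω → ℝ} (hX : Measurable X) (hZ : Measurable Z) (hε : Measurable ε)
    (hindep : IndepFun (fun ω => (X ω, Z ω)) ε μ) (t : ℝ) :
    ∫ ω, (Z ω : ℂ) * cexp (I * t * (X ω + ε ω : ℝ)) ∂μ
      = (∫ ω, (Z ω : ℂ) * cexp (I * t * X ω) ∂μ) *
          ∫ ω, cexp (I * t * ε ω) ∂μ := by
  have hsplit : ∀ ω, (Z ω : ℂ) * cexp (I * t * (X ω + ε ω : ℝ))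
      = (Z ω : ℂ) * cexp (I * t * X ω) * cexp (I * t * ε ω) := fun ω => by
    push_cast
    rw [mul_add, exp_add]
    ring
  simp_rw [hsplit]
  refine IndepFun.integral_fun_mul_eq_mul_integral ?_ ?_ ?_
  · exact hindep.comp (φ := fun p : ℝ × ℝ => (p.2 : ℂ) * cexp (I * t * p.1))
      (ψ := fun e : ℝ => cexp (I * t * e)) (by fun_prop) (by fun_prop)
  · exact Measurable.aestronglyMeasurable (by fun_prop)
  · exact Measurable.aestronglyMeasurable (by fun_prop)

theorem integral_mul_integral_mul_cexp_swap {Ω : Type*} [MeasurableSpace Ω] {μ : Measure Ω}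
    [SFinite μ] {g : ℝ → ℂ} (hg : Integrable g) {Z W : Ω → ℝ} (hZ : Integrable Z μ)
    (hW : Measurable W) :
    ∫ t : ℝ, g t * ∫ ω, (Z ω : ℂ) * cexp (-(I * t * W ω)) ∂μ
      = ∫ ω, (Z ω : ℂ) * (∫ t : ℝ, cexp (-(I * t * W ω)) * g t) ∂μ := by
  have hint : Integrable (Function.uncurry fun (t : ℝ) (ω : Ω) =>
      g t * (Z ω : ℂ) * cexp (-(I * t * W ω))) (volume.prod μ) := by
    refine (hg.mul_prod hZ.ofReal).mul_bdd (c := 1) (Measurable.aestronglyMeasurable ?_) ?_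
    · fun_prop
    · refine Filter.Eventually.of_forall fun p => le_of_eq ?_
      rw [norm_exp]
      simp
  calc ∫ t : ℝ, g t * ∫ ω, (Z ω : ℂ) * cexp (-(I * t * W ω)) ∂μ
      = ∫ t : ℝ, ∫ ω, g t * (Z ω : ℂ) * cexp (-(I * t * W ω)) ∂μ := by
        simp_rw [mul_assoc, integral_const_mul]
    _ = ∫ ω, (∫ t : ℝ, g t * (Z ω : ℂ) * cexp (-(I * t * W ω))) ∂μ :=
        integral_integral_swap hint
    _ = ∫ ω, (Z ω : ℂ) * (∫ t : ℝ, cexp (-(I * t * W ω)) * g t) ∂μ := by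
        simp_rw [← integral_const_mul]
        congr 1 with ω
        congr 1 with t
        ring

theorem stmt_6_general {Ω : Type*} [MeasureSpace Ω] [IsProbabilityMeasure (ℙ : Measure Ω)]
    (X Z ε : Ω → ℝ) (hX : Measurable X) (hZ : Measurable Z) (hε : Measurable ε)
    (hZint : Integrable Z ℙ)
    (hindep : IndepFun (fun ω => (X ω, Z ω)) ε ℙ)
    (Y : Ω → ℝ) (hY : Y = fun ω => X ω + ε ω)
    (φε : ℝ → ℂ) (hφε : ∀ t : ℝ, φε t = ∫ ω, Complex.exp (Complex.I * t * ε ω) ∂ℙ)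
    (hφε0 : ∀ t, φε t ≠ 0)
    (K : ℝ → ℝ) (hKc : Continuous K) (hKint : Integrable K)
    (φK : ℝ → ℂ) (hφK : ∀ t : ℝ, φK t = ∫ x : ℝ, Complex.exp (Complex.I * t * x) * K x)
    (hφKint : Integrable φK)
    (h : ℝ) (hh : 0 < h) :
    ∀ x : ℝ,
      ((2 * Real.pi : ℝ) : ℂ)⁻¹ *
          ∫ t : ℝ, Complex.exp (-(Complex.I * t * x)) * φK (t * h) *
            (∫ ω, (Z ω : ℂ) * Complex.exp (Complex.I * t * Y ω) ∂ℙ) / φε t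
        = ((h⁻¹ * ∫ ω, Z ω * K ((x - X ω) / h) ∂ℙ : ℝ) : ℂ) := by
  intro x
  subst hY
  have hdeconv : ∀ t : ℝ, cexp (-(I * t * x)) * φK (t * h) *
        (∫ ω, (Z ω : ℂ) * cexp (I * t * (X ω + ε ω : ℝ))) / φε t
      = φK (t * h) * ∫ ω, (Z ω : ℂ) * cexp (-(I * t * (x - X ω : ℝ))) := fun t => by
    rw [integral_mul_cexp_add_of_indepFun hX hZ hε hindep, ← hφε, ← mul_assoc,
      mul_div_cancel_right₀ _ (hφε0 t), ← integral_const_mul, ← integral_const_mul]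
    congr 1 with ω
    rw [show -(I * t * (x - X ω : ℝ)) = -(I * t * x) + I * t * X ω by push_cast; ring, exp_add]
    ring
  have hinner : ∀ ω, ∫ t : ℝ, cexp (-(I * t * (x - X ω : ℝ))) * φK (t * h)
      = (2 * Real.pi / h : ℂ) * K ((x - X ω) / h) := fun ω => by
    simp only [hφK]
    exact integral_cexp_neg_mul_integral_cexp_mul_comp_mul_right
      (continuous_ofReal.comp hKc) hKint.ofReal (funext hφK ▸ hφKint) hh (x - X ω)
  simp_rw [hdeconv]
  rw [integral_mul_integral_mul_cexp_swap (hφKint.comp_mul_right' hh.ne') hZint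
    (by fun_prop)]
  simp_rw [hinner, mul_left_comm _ (2 * Real.pi / h : ℂ), ← ofReal_mul]
  rw [integral_const_mul, integral_complex_ofReal]
  have hπ : (Real.pi : ℂ) ≠ 0 := ofReal_ne_zero.mpr Real.pi_ne_zero
  push_cast
  field_simp

/-- For real random variables `(X, Z)` with `E|Z| < ∞`, `ε` independent
of the pair `(X, Z)`, `Y = X + ε`, nowhere-vanishing `φ_ε(t) = E[exp(itε)]`, and a
continuous integrable kernel `K` with integrable Fourier transform `φ_K`, if
`t ↦ φ_K(th)/φ_ε(t)` is integrable then for all `x`: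
`(2π)⁻¹ ∫ exp(−itx) φ_K(th) E[Z exp(itY)]/φ_ε(t) dt = h⁻¹ E[Z K((x − X)/h)]`. -/
theorem stmt_6 {Ω : Type*} [MeasureSpace Ω] [IsProbabilityMeasure (ℙ : Measure Ω)]
    (X Z ε : Ω → ℝ) (hX : Measurable X) (hZ : Measurable Z) (hε : Measurable ε)
    (hZint : Integrable Z ℙ)
    (hindep : IndepFun (fun ω => (X ω, Z ω)) ε ℙ)
    (Y : Ω → ℝ) (hY : Y = fun ω => X ω + ε ω)
    (φε : ℝ → ℂ) (hφε : ∀ t : ℝ, φε t = ∫ ω, Complex.exp (Complex.I * t * ε ω) ∂ℙ)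
    (hφε0 : ∀ t, φε t ≠ 0)
    (K : ℝ → ℝ) (hKc : Continuous K) (hKint : Integrable K)
    (φK : ℝ → ℂ) (hφK : ∀ t : ℝ, φK t = ∫ x : ℝ, Complex.exp (Complex.I * t * x) * K x)
    (hφKint : Integrable φK)
    (h : ℝ) (hh : 0 < h)
    (hint : Integrable (fun t : ℝ => φK (t * h) / φε t)) :
    ∀ x : ℝ,
      ((2 * Real.pi : ℝ) : ℂ)⁻¹ *
          ∫ t : ℝ, Complex.exp (-(Complex.I * t * x)) * φK (t * h) *
            (∫ ω, (Z ω : ℂ) * Complex.exp (Complex.I * t * Y ω) ∂ℙ) / φε t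
        = ((h⁻¹ * ∫ ω, Z ω * K ((x - X ω) / h) ∂ℙ : ℝ) : ℂ) :=
  stmt_6_general X Z ε hX hZ hε hZint hindep Y hY φε hφε hφε0 K hKc hKint φK hφK hφKint h hh
end

section
/- Let Y₁,…,Y_n be i.i.d. real random variables, let φ_ε : ℝ → ℂ be continuous and nowhere vanishing, let K : ℝ → ℝ be integrable with Fourier transform φ_K, let h > 0, and assume t ↦ φ_K(th)/φ_ε(t) is integrable. Define f̂(x) = (2π)⁻¹ ∫_ℝ exp(−itx) φ_K(th) φ̂_Y(t)/φ_ε(t) dt. Then E[ sup_{x ∈ ℝ} |f̂(x) − E f̂(x)|² ] ≤ (2π)⁻² n⁻¹ ( ∫_ℝ |φ_K(th)|/|φ_ε(t)| dt )². -/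
/-!
With `w(t) = φ_K(th)/φ_ε(t)` and `Δ(ω, t) = φ̂_Y(t) - φ_Y(t)`, one has
`|f̂(x) - E f̂(x)| ≤ (2π)⁻¹ ∫ |w| |Δ|` uniformly in `x`. Cauchy–Schwarz for the measure `|w| dt`
bounds the square of the right-hand side by `(2π)⁻² (∫ |w|) (∫ |w| |Δ|²)`, and by Fubini the
expectation of the latter is at most `(2π)⁻² (∫ |w|) ∫ |w(t)| E|Δ(t)|² dt`. Finally
`E|Δ(t)|² = Var(e^{itY₁}) / n ≤ 1 / n`, because the centred summands `e^{itY_i} - φ_Y(t)` are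
independent, hence orthogonal in `L²`.
-/

open MeasureTheory ProbabilityTheory Complex

section Variance

variable {Ω E : Type*} [MeasurableSpace Ω] {μ : Measure Ω}
  [NormedAddCommGroup E] [InnerProductSpace ℝ E] [CompleteSpace E]

lemma integral_norm_sub_integral_sq [IsProbabilityMeasure μ] {Z : Ω → E} (hZ : MemLp Z 2 μ) :
    ∫ ω, ‖Z ω - μ[Z]‖ ^ 2 ∂μ = ∫ ω, ‖Z ω‖ ^ 2 ∂μ - ‖μ[Z]‖ ^ 2 := by
  have hZi : Integrable Z μ := hZ.integrable one_le_two
  have hZ2 : Integrable (fun ω => ‖Z ω‖ ^ 2) μ :=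
    (memLp_two_iff_integrable_sq_norm hZ.1).1 hZ
  have hinner : Integrable (fun ω => 2 * inner ℝ (Z ω) μ[Z]) μ :=
    (hZi.inner_const (𝕜 := ℝ) μ[Z]).const_mul 2
  simp_rw [norm_sub_sq_real]
  rw [integral_add (hZ2.sub' hinner) (integrable_const _), integral_sub hZ2 hinner,
    integral_const_mul]
  simp_rw [real_inner_comm μ[Z]]
  rw [integral_inner hZi, real_inner_self_eq_norm_sq, integral_const, probReal_univ, one_smul]
  ring

lemma integral_norm_sum_sq_of_indepFun [IsFiniteMeasure μ] [MeasurableSpace E] [BorelSpace E]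
    {ι : Type*} (s : Finset ι) {V : ι → Ω → E} (hV : ∀ i ∈ s, MemLp (V i) 2 μ)
    (hmean : ∀ i ∈ s, μ[V i] = 0) (hindep : Set.Pairwise s fun i j => V i ⟂ᵢ[μ] V j) :
    ∫ ω, ‖∑ i ∈ s, V i ω‖ ^ 2 ∂μ = ∑ i ∈ s, ∫ ω, ‖V i ω‖ ^ 2 ∂μ := by
  have hint : ∀ i ∈ s, ∀ j ∈ s, Integrable (fun ω => inner ℝ (V i ω) (V j ω)) μ := by
    intro i hi j hj
    obtain rfl | hij := eq_or_ne i j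
    · simp_rw [real_inner_self_eq_norm_sq]
      exact (memLp_two_iff_integrable_sq_norm (hV i hi).1).1 (hV i hi)
    · exact (hindep hi hj hij).integrable_bilin ((hV i hi).integrable one_le_two)
        ((hV j hj).integrable one_le_two) (innerSL ℝ)
  have hcross : ∀ i ∈ s, ∀ j ∈ s, j ≠ i → ∫ ω, inner ℝ (V i ω) (V j ω) ∂μ = 0 := by
    intro i hi j hj hji
    exact ((hindep hi hj hji.symm).integral_bilin ((hV i hi).integrable one_le_two)
      ((hV j hj).integrable one_le_two) (innerSL ℝ)).trans (by simp [hmean i hi])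
  simp_rw [← real_inner_self_eq_norm_sq, sum_inner, inner_sum]
  rw [integral_finsetSum _ fun i hi => integrable_finsetSum _ fun j hj => hint i hi j hj]
  refine Finset.sum_congr rfl fun i hi => ?_
  rw [integral_finsetSum _ fun j hj => hint i hi j hj]
  exact Finset.sum_eq_single_of_mem i hi fun j hj hji => hcross i hi j hj hji

lemma integral_norm_sq_smul_sum_sub_integral [IsProbabilityMeasure μ] [MeasurableSpace E]
    [BorelSpace E] {ι : Type*} [Fintype ι] {Z : ι → Ω → E} {i₀ : ι} (hZ : MemLp (Z i₀) 2 μ)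
    (hindep : Pairwise fun i j => Z i ⟂ᵢ[μ] Z j) (hident : ∀ i, IdentDistrib (Z i) (Z i₀) μ μ) :
    ∫ ω, ‖(Fintype.card ι : ℝ)⁻¹ • ∑ i, Z i ω - μ[Z i₀]‖ ^ 2 ∂μ
      = (Fintype.card ι : ℝ)⁻¹ * ∫ ω, ‖Z i₀ ω - μ[Z i₀]‖ ^ 2 ∂μ := by
  set m := μ[Z i₀]
  have hcard : (Fintype.card ι : ℝ) ≠ 0 := by
    have : 0 < Fintype.card ι := Fintype.card_pos_iff.2 ⟨i₀⟩
    positivity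
  have hcentre : ∀ ω, (Fintype.card ι : ℝ)⁻¹ • ∑ i, Z i ω - m
      = (Fintype.card ι : ℝ)⁻¹ • ∑ i, (Z i ω - m) := by
    intro ω
    rw [Finset.sum_sub_distrib, smul_sub, Finset.sum_const, Finset.card_univ,
      ← Nat.cast_smul_eq_nsmul ℝ, inv_smul_smul₀ hcard]
  have hsq : ∀ i, ∫ ω, ‖Z i ω - m‖ ^ 2 ∂μ = ∫ ω, ‖Z i₀ ω - m‖ ^ 2 ∂μ := fun i =>
    ((hident i).comp (by fun_prop : Measurable fun z : E => ‖z - m‖ ^ 2)).integral_eq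
  have hmemLp : ∀ i, MemLp (Z i) 2 μ := fun i => (hident i).symm.memLp_snd hZ
  have hmean : ∀ i, ∫ ω, (Z i ω - m) ∂μ = 0 := fun i => by
    rw [integral_sub ((hmemLp i).integrable one_le_two) (integrable_const m),
      (hident i).integral_eq, integral_const, probReal_univ, one_smul, sub_self]
  have hpyth := integral_norm_sum_sq_of_indepFun (μ := μ) Finset.univ (V := fun i ω => Z i ω - m)
    (fun i _ => (hmemLp i).sub (memLp_const m)) (fun i _ => hmean i)
    (fun i _ j _ hij => (hindep hij).comp (measurable_id.sub_const m) (measurable_id.sub_const m))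
  simp_rw [hcentre, norm_smul, mul_pow, integral_const_mul, hpyth, hsq, Finset.sum_const,
    Finset.card_univ, nsmul_eq_mul, norm_inv, Real.norm_natCast]
  field_simp

end Variance

section CharFun

lemma norm_exp_I_mul_mul (t y : ℝ) : ‖exp (I * t * y)‖ = 1 := by
  rw [mul_assoc, ← ofReal_mul, norm_exp_I_mul_ofReal]

variable {Ω : Type*} [MeasurableSpace Ω] {μ : Measure Ω} [IsProbabilityMeasure μ]

lemma norm_integral_exp_I_mul_mul_le_one (X : Ω → ℝ) (t : ℝ) :
    ‖∫ ω, exp (I * t * X ω) ∂μ‖ ≤ 1 := by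
  simpa using norm_integral_le_of_norm_le_const (μ := μ)
    (Filter.Eventually.of_forall fun ω => (norm_exp_I_mul_mul t (X ω)).le)

lemma integral_norm_sq_empirical_charFun_sub_le {n : ℕ} {Y : Fin n → Ω → ℝ}
    (hmeas : ∀ i, Measurable (Y i)) (hindep : iIndepFun Y μ) {i₀ : Fin n}
    (hident : ∀ i, IdentDistrib (Y i) (Y i₀) μ μ) (t : ℝ) :
    ∫ ω, ‖(n : ℂ)⁻¹ * ∑ i, exp (I * t * Y i ω) - ∫ ω', exp (I * t * Y i₀ ω') ∂μ‖ ^ 2 ∂μ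
      ≤ (n : ℝ)⁻¹ := by
  have he : Measurable fun y : ℝ => exp (I * t * y) := by fun_prop
  have hZ : MemLp (fun ω => exp (I * t * Y i₀ ω)) 2 μ :=
    .of_bound (he.comp (hmeas i₀)).aestronglyMeasurable 1
      (Filter.Eventually.of_forall fun ω => (norm_exp_I_mul_mul t _).le)
  have hvar := integral_norm_sq_smul_sum_sub_integral (μ := μ)
    (Z := fun i ω => exp (I * t * Y i ω)) hZ (fun i j hij => (hindep.indepFun hij).comp he he)
    (fun i => (hident i).comp he)
  simp only [Fintype.card_fin, real_smul, ofReal_inv, ofReal_natCast] at hvar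
  rw [hvar, integral_norm_sub_integral_sq hZ]
  simp only [norm_exp_I_mul_mul, one_pow, integral_const, probReal_univ, one_smul]
  exact mul_le_of_le_one_right (by positivity) (sub_le_self _ (sq_nonneg _))

end CharFun

section Integral

variable {T : Type*} [MeasurableSpace T] {ν : Measure T}

lemma sq_integral_mul_le_integral_mul_integral_mul_sq {a b : T → ℝ} (ha : 0 ≤ a) (hb : 0 ≤ b)
    (ha_int : Integrable a ν) (hab : Integrable (fun t => a t * b t ^ 2) ν) :
    (∫ t, a t * b t ∂ν) ^ 2 ≤ (∫ t, a t ∂ν) * ∫ t, a t * b t ^ 2 ∂ν := by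
  have hsqrt_sq : ∀ {u : ℝ}, 0 ≤ u → √u ^ (2 : ℝ) = u := fun hu => by
    rw [Real.rpow_two, Real.sq_sqrt hu]
  have hmul : ∀ t, √(a t) * √(a t * b t ^ 2) = a t * b t := fun t => by
    rw [← Real.sqrt_mul (ha t), ← mul_assoc, ← pow_two, ← mul_pow,
      Real.sqrt_sq (mul_nonneg (ha t) (hb t))]
  have hmemLp : ∀ {u : T → ℝ}, (∀ t, 0 ≤ u t) → Integrable u ν →
      MemLp (fun t => √(u t)) (ENNReal.ofReal 2) ν := fun hu0 hu => by
    rw [ENNReal.ofReal_ofNat,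
      memLp_two_iff_integrable_sq (Real.continuous_sqrt.comp_aestronglyMeasurable hu.1)]
    simpa only [Real.sq_sqrt (hu0 _)] using hu
  have holder := integral_mul_le_Lp_mul_Lq_of_nonneg Real.HolderConjugate.two_two
    (Filter.Eventually.of_forall fun t => Real.sqrt_nonneg (a t))
    (Filter.Eventually.of_forall fun t => Real.sqrt_nonneg (a t * b t ^ 2))
    (hmemLp ha ha_int) (hmemLp (fun t => mul_nonneg (ha t) (sq_nonneg (b t))) hab)
  simp only [hmul, hsqrt_sq (ha _), hsqrt_sq (mul_nonneg (ha _) (sq_nonneg (b _)))] at holder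
  calc (∫ t, a t * b t ∂ν) ^ 2
      ≤ ((∫ t, a t ∂ν) ^ (1 / 2 : ℝ) * (∫ t, a t * b t ^ 2 ∂ν) ^ (1 / 2 : ℝ)) ^ 2 :=
        pow_le_pow_left₀ (integral_nonneg fun t => mul_nonneg (ha t) (hb t)) holder 2
    _ = (∫ t, a t ∂ν) * ∫ t, a t * b t ^ 2 ∂ν := by
        rw [mul_pow, ← Real.sqrt_eq_rpow, ← Real.sqrt_eq_rpow,
          Real.sq_sqrt (integral_nonneg ha),
          Real.sq_sqrt (integral_nonneg fun t => mul_nonneg (ha t) (sq_nonneg (b t)))]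

lemma MeasureTheory.Integrable.mul_norm_sq_of_norm_le {E : Type*} [NormedAddCommGroup E]
    {a : T → ℝ} {D : T → E} {M : ℝ} (ha : Integrable a ν) (hD : AEStronglyMeasurable D ν)
    (hDM : ∀ t, ‖D t‖ ≤ M) : Integrable (fun t => a t * ‖D t‖ ^ 2) ν :=
  ha.mul_bdd (c := M ^ 2) (hD.norm.pow 2) <| Filter.Eventually.of_forall fun t => by
    rw [norm_pow, norm_norm]
    exact pow_le_pow_left₀ (norm_nonneg _) (hDM t) 2

variable {Ω : Type*} [MeasurableSpace Ω] {μ : Measure Ω} [IsFiniteMeasure μ] [SFinite ν]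

lemma integral_integral_mul_le_of_forall_integral_le {a : T → ℝ} {F : Ω → T → ℝ} {σ : ℝ}
    (ha : 0 ≤ a) (ha_int : Integrable a ν)
    (hF : Integrable (fun p : Ω × T => a p.2 * F p.1 p.2) (μ.prod ν))
    (hσ : ∀ t, ∫ ω, F ω t ∂μ ≤ σ) :
    ∫ ω, ∫ t, a t * F ω t ∂ν ∂μ ≤ σ * ∫ t, a t ∂ν := by
  rw [integral_integral_swap hF, ← integral_const_mul]
  refine integral_mono hF.integral_prod_right (ha_int.const_mul σ) fun t => ?_
  rw [integral_const_mul, mul_comm σ]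
  exact mul_le_mul_of_nonneg_left (hσ t) (ha t)

lemma integral_iSup_norm_sq_le_of_norm_le_integral_mul_norm {ι F E : Type*} [Nonempty ι]
    [NormedAddCommGroup F] [NormedAddCommGroup E] {g : Ω → ι → F} {a : T → ℝ}
    {D : Ω → T → E} {c M σ : ℝ} (ha : 0 ≤ a) (ha_int : Integrable a ν)
    (hD : AEStronglyMeasurable (fun p : Ω × T => D p.1 p.2) (μ.prod ν))
    (hDM : ∀ ω t, ‖D ω t‖ ≤ M) (hσ : ∀ t, ∫ ω, ‖D ω t‖ ^ 2 ∂μ ≤ σ)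
    (hg : ∀ ω x, ‖g ω x‖ ≤ c * ∫ t, a t * ‖D ω t‖ ∂ν) :
    ∫ ω, ⨆ x, ‖g ω x‖ ^ 2 ∂μ ≤ c ^ 2 * σ * (∫ t, a t ∂ν) ^ 2 := by
  have hprod : Integrable (fun p : Ω × T => a p.2 * ‖D p.1 p.2‖ ^ 2) (μ.prod ν) :=
    (ha_int.comp_snd μ).mul_norm_sq_of_norm_le hD fun p => hDM p.1 p.2
  have hsup : ∀ᵐ ω ∂μ,
      ⨆ x, ‖g ω x‖ ^ 2 ≤ c ^ 2 * ((∫ t, a t ∂ν) * ∫ t, a t * ‖D ω t‖ ^ 2 ∂ν) := by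
    filter_upwards [hD.prodMk_left] with ω hDω
    refine ciSup_le fun x => ?_
    calc ‖g ω x‖ ^ 2 ≤ (c * ∫ t, a t * ‖D ω t‖ ∂ν) ^ 2 :=
          pow_le_pow_left₀ (norm_nonneg _) (hg ω x) 2
      _ = c ^ 2 * (∫ t, a t * ‖D ω t‖ ∂ν) ^ 2 := mul_pow _ _ _
      _ ≤ c ^ 2 * ((∫ t, a t ∂ν) * ∫ t, a t * ‖D ω t‖ ^ 2 ∂ν) := by
          gcongr
          exact sq_integral_mul_le_integral_mul_integral_mul_sq ha (fun t => norm_nonneg _)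
            ha_int (ha_int.mul_norm_sq_of_norm_le hDω (hDM ω))
  -- `ω ↦ ⨆ x, ‖g ω x‖ ^ 2` need not be measurable: only the majorant has to be integrable.
  calc ∫ ω, ⨆ x, ‖g ω x‖ ^ 2 ∂μ
      ≤ ∫ ω, c ^ 2 * ((∫ t, a t ∂ν) * ∫ t, a t * ‖D ω t‖ ^ 2 ∂ν) ∂μ :=
        integral_mono_of_nonneg (ae_of_all _ fun ω => Real.iSup_nonneg fun x => by positivity)
          ((hprod.integral_prod_left.const_mul _).const_mul _) hsup
    _ = c ^ 2 * ((∫ t, a t ∂ν) * ∫ ω, ∫ t, a t * ‖D ω t‖ ^ 2 ∂ν ∂μ) := by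
        rw [integral_const_mul, integral_const_mul]
    _ ≤ c ^ 2 * ((∫ t, a t ∂ν) * (σ * ∫ t, a t ∂ν)) := by
        have := integral_nonneg ha (μ := ν)
        gcongr
        exact integral_integral_mul_le_of_forall_integral_le ha ha_int hprod hσ
    _ = c ^ 2 * σ * (∫ t, a t ∂ν) ^ 2 := by ring

end Integral

section Estimator

lemma norm_natCast_inv_mul_sum_le {n : ℕ} {z : Fin n → ℂ} {M : ℝ} (hM : 0 ≤ M)
    (hz : ∀ i, ‖z i‖ ≤ M) : ‖(n : ℂ)⁻¹ * ∑ i, z i‖ ≤ M := by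
  rcases Nat.eq_zero_or_pos n with rfl | hn
  · simpa using hM
  rw [norm_mul, norm_inv, norm_natCast, inv_mul_le_iff₀ (by exact_mod_cast hn)]
  calc ‖∑ i, z i‖ ≤ ∑ i, ‖z i‖ := norm_sum_le _ _
    _ ≤ ∑ _i : Fin n, M := Finset.sum_le_sum fun i _ => hz i
    _ = n * M := by simp

lemma norm_integral_sub_integral_le_integral_norm_mul {p q S m : ℝ → ℂ} {M : ℝ}
    (hpq : Integrable fun t => p t / q t) (hS : AEStronglyMeasurable S) (hSM : ∀ t, ‖S t‖ ≤ M)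
    (hm : AEStronglyMeasurable m) (hmM : ∀ t, ‖m t‖ ≤ M) (x : ℝ) :
    ‖(∫ t : ℝ, exp (-(I * t * x)) * p t * S t / q t)
        - ∫ t : ℝ, exp (-(I * t * x)) * p t * m t / q t‖
      ≤ ∫ t : ℝ, ‖p t / q t‖ * ‖S t - m t‖ := by
  have hexp : ∀ t : ℝ, ‖exp (-(I * t * x))‖ = 1 := fun t => by
    rw [exp_neg, norm_inv, norm_exp_I_mul_mul, inv_one]
  have hint : ∀ {g : ℝ → ℂ}, AEStronglyMeasurable g → (∀ t, ‖g t‖ ≤ M) →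
      Integrable fun t : ℝ => exp (-(I * t * x)) * p t * g t / q t := fun hg hgM => by
    simp_rw [mul_right_comm _ (p _), mul_div_assoc]
    refine hpq.bdd_mul (c := M) (by fun_prop) (Filter.Eventually.of_forall fun t => ?_)
    rw [norm_mul, hexp, one_mul]
    exact hgM t
  rw [← integral_sub (hint hS hSM) (hint hm hmM)]
  refine (norm_integral_le_integral_norm _).trans (le_of_eq (integral_congr_ae
    (Filter.Eventually.of_forall fun t => ?_)))
  dsimp only
  rw [show exp (-(I * t * x)) * p t * S t / q t - exp (-(I * t * x)) * p t * m t / q t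
      = exp (-(I * t * x)) * ((S t - m t) * (p t / q t)) by ring, norm_mul, hexp, one_mul,
    norm_mul, mul_comm]

end Estimator

theorem stmt_8_general {Ω : Type*} [MeasureSpace Ω] [IsProbabilityMeasure (ℙ : Measure Ω)]
    (n : ℕ) (hn : 1 ≤ n) (Y : Fin n → Ω → ℝ)
    (hmeas : ∀ i, Measurable (Y i))
    (hindep : iIndepFun Y ℙ)
    (hident : ∀ i j, IdentDistrib (Y i) (Y j) ℙ ℙ)
    (φK : ℝ → ℂ)
    (φε : ℝ → ℂ)
    (h : ℝ)
    (hint : Integrable (fun t : ℝ => φK (t * h) / φε t))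
    (fhat : Ω → ℝ → ℂ)
    (hfhat : ∀ ω x, fhat ω x =
      ((2 * Real.pi : ℝ) : ℂ)⁻¹ *
        ∫ t : ℝ, Complex.exp (-(Complex.I * t * x)) * φK (t * h) *
          ((n : ℂ)⁻¹ * ∑ i, Complex.exp (Complex.I * t * Y i ω)) / φε t)
    (Ef : ℝ → ℂ)
    (hEf : ∀ x, Ef x =
      ((2 * Real.pi : ℝ) : ℂ)⁻¹ *
        ∫ t : ℝ, Complex.exp (-(Complex.I * t * x)) * φK (t * h) *
          (∫ ω, Complex.exp (Complex.I * t * Y ⟨0, hn⟩ ω) ∂ℙ) / φε t) :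
    (∫ ω, (⨆ x : ℝ, ‖fhat ω x - Ef x‖ ^ 2) ∂ℙ)
      ≤ ((2 * Real.pi) ^ 2)⁻¹ * (n : ℝ)⁻¹ * (∫ t : ℝ, ‖φK (t * h)‖ / ‖φε t‖) ^ 2 := by
  set S : Ω → ℝ → ℂ := fun ω t => (n : ℂ)⁻¹ * ∑ i, exp (I * t * Y i ω)
  set m : ℝ → ℂ := fun t => ∫ ω, exp (I * t * Y ⟨0, hn⟩ ω) ∂ℙ
  have hm_meas : Measurable m :=
    (StronglyMeasurable.integral_prod_left (μ := ℙ)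
      (f := fun ω (t : ℝ) => exp (I * t * Y ⟨0, hn⟩ ω)) (by fun_prop)).measurable
  have hS_le : ∀ ω t, ‖S ω t‖ ≤ 1 := fun ω t =>
    norm_natCast_inv_mul_sum_le zero_le_one fun i => (norm_exp_I_mul_mul t (Y i ω)).le
  have hm_le : ∀ t, ‖m t‖ ≤ 1 := norm_integral_exp_I_mul_mul_le_one _
  have hD_meas : Measurable fun p : Ω × ℝ => S p.1 p.2 - m p.2 :=
    (by fun_prop : Measurable fun p : Ω × ℝ => S p.1 p.2).sub (hm_meas.comp measurable_snd)
  have hD_le : ∀ ω t, ‖S ω t - m t‖ ≤ 2 := fun ω t =>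
    (norm_sub_le _ _).trans (by linarith [hS_le ω t, hm_le t])
  have hdev : ∀ ω x, ‖fhat ω x - Ef x‖
      ≤ (2 * Real.pi)⁻¹ * ∫ t, ‖φK (t * h) / φε t‖ * ‖S ω t - m t‖ := by
    intro ω x
    rw [hfhat, hEf, ← mul_sub, norm_mul, norm_inv, norm_real, Real.norm_of_nonneg (by positivity)]
    gcongr
    exact norm_integral_sub_integral_le_integral_norm_mul hint (by fun_prop) (hS_le ω)
      hm_meas.aestronglyMeasurable hm_le x
  calc (∫ ω, (⨆ x : ℝ, ‖fhat ω x - Ef x‖ ^ 2) ∂ℙ)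
      ≤ ((2 * Real.pi)⁻¹) ^ 2 * (n : ℝ)⁻¹ * (∫ t, ‖φK (t * h) / φε t‖) ^ 2 :=
        integral_iSup_norm_sq_le_of_norm_le_integral_mul_norm (fun t => norm_nonneg _) hint.norm
          hD_meas.aestronglyMeasurable hD_le
          (integral_norm_sq_empirical_charFun_sub_le hmeas hindep fun i => hident i ⟨0, hn⟩) hdev
    _ = _ := by simp_rw [norm_div, inv_pow]

/-- For i.i.d. `Y₁, …, Y_n`, continuous nowhere-vanishing `φ_ε`,
integrable `K` with Fourier transform `φ_K`, `h > 0`, and `t ↦ φ_K(th)/φ_ε(t)` integrable,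
the deconvolution density estimator
`f̂(x) = (2π)⁻¹ ∫ exp(−itx) φ_K(th) φ̂_Y(t)/φ_ε(t) dt` satisfies
`E[sup_x |f̂(x) − E f̂(x)|²] ≤ (2π)⁻² n⁻¹ (∫ |φ_K(th)|/|φ_ε(t)| dt)²`. -/
theorem stmt_8 {Ω : Type*} [MeasureSpace Ω] [IsProbabilityMeasure (ℙ : Measure Ω)]
    (n : ℕ) (hn : 1 ≤ n) (Y : Fin n → Ω → ℝ)
    (hmeas : ∀ i, Measurable (Y i))
    (hindep : iIndepFun Y ℙ)
    (hident : ∀ i j, IdentDistrib (Y i) (Y j) ℙ ℙ)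
    (K : ℝ → ℝ) (hK : Integrable K)
    (φK : ℝ → ℂ) (hφK : ∀ t : ℝ, φK t = ∫ x : ℝ, Complex.exp (Complex.I * t * x) * K x)
    (φε : ℝ → ℂ) (hφεc : Continuous φε) (hφε0 : ∀ t, φε t ≠ 0)
    (h : ℝ) (hh : 0 < h)
    (hint : Integrable (fun t : ℝ => φK (t * h) / φε t))
    (fhat : Ω → ℝ → ℂ)
    (hfhat : ∀ ω x, fhat ω x =
      ((2 * Real.pi : ℝ) : ℂ)⁻¹ *
        ∫ t : ℝ, Complex.exp (-(Complex.I * t * x)) * φK (t * h) *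
          ((n : ℂ)⁻¹ * ∑ i, Complex.exp (Complex.I * t * Y i ω)) / φε t)
    (Ef : ℝ → ℂ)
    (hEf : ∀ x, Ef x =
      ((2 * Real.pi : ℝ) : ℂ)⁻¹ *
        ∫ t : ℝ, Complex.exp (-(Complex.I * t * x)) * φK (t * h) *
          (∫ ω, Complex.exp (Complex.I * t * Y ⟨0, hn⟩ ω) ∂ℙ) / φε t) :
    (∫ ω, (⨆ x : ℝ, ‖fhat ω x - Ef x‖ ^ 2) ∂ℙ)
      ≤ ((2 * Real.pi) ^ 2)⁻¹ * (n : ℝ)⁻¹ * (∫ t : ℝ, ‖φK (t * h)‖ / ‖φε t‖) ^ 2 :=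
  stmt_8_general n hn Y hmeas hindep hident φK φε h hint fhat hfhat Ef hEf
end

section
/- Let (Y₁,Z₁),…,(Y_n,Z_n) be i.i.d. pairs of real random variables with E[Z₁²] < ∞, let φ_ε : ℝ → ℂ be continuous and nowhere vanishing, let K : ℝ → ℝ be integrable with Fourier transform φ_K, let h > 0, and assume t ↦ φ_K(th)/φ_ε(t) is integrable. Define r̂(x) = (2π)⁻¹ ∫_ℝ exp(−itx) φ_K(th) ( n⁻¹ Σ_{i=1}^n Z_i exp(itY_i) ) / φ_ε(t) dt. Then E[ sup_{x ∈ ℝ} |r̂(x) − E r̂(x)|² ] ≤ (2π)⁻² n⁻¹ E[Z₁²] ( ∫_ℝ |φ_K(th)|/|φ_ε(t)| dt )². -/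
/-!
Write `w t = φ_K(th) / φ_ε(t)` and let `D(t)` be the centred empirical mean of the variables
`Z_j e^{itY_j}`. Then `r̂(x) - E r̂(x) = (2π)⁻¹ ∫ e^{-itx} w(t) D(t) dt`, so uniformly in `x` the
Cauchy–Schwarz inequality for the weight `|w|` gives
`|r̂(x) - E r̂(x)|² ≤ (2π)⁻² (∫ |w|) (∫ |w| |D|²)`. Taking expectations and exchanging the
integrals, it remains to bound `E |D(t)|²`, the variance of a mean of `n` i.i.d. variables, by
`n⁻¹ E |Z₁ e^{itY₁}|² = n⁻¹ E Z₁²`.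
-/

open MeasureTheory ProbabilityTheory

-- The quadratic `x ↦ ∫ a (g - x)²` is nonnegative, so its discriminant is nonpositive.
theorem sq_integral_mul_le_integral_mul_integral_mul_sq_s9 {α : Type*} [MeasurableSpace α]
    {μ : Measure α} {a g : α → ℝ} (ha0 : 0 ≤ᵐ[μ] a) (ha : Integrable a μ)
    (hag : Integrable (fun t => a t * g t) μ) (hag2 : Integrable (fun t => a t * g t ^ 2) μ) :
    (∫ t, a t * g t ∂μ) ^ 2 ≤ (∫ t, a t ∂μ) * ∫ t, a t * g t ^ 2 ∂μ := by
  have hquad : ∀ x : ℝ, 0 ≤ (∫ t, a t ∂μ) * (x * x) + (-2 * ∫ t, a t * g t ∂μ) * x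
      + ∫ t, a t * g t ^ 2 ∂μ := fun x => calc
    0 ≤ ∫ t, a t * (g t - x) ^ 2 ∂μ :=
      integral_nonneg_of_ae (ha0.mono fun t ht => mul_nonneg ht (sq_nonneg _))
    _ = ∫ t, (a t * g t ^ 2 - 2 * x * (a t * g t) + x ^ 2 * a t) ∂μ :=
      integral_congr_ae (ae_of_all _ fun t => by ring)
    _ = _ := by
      rw [integral_add (hag2.sub' (hag.const_mul _)) (ha.const_mul _),
        integral_sub hag2 (hag.const_mul _), integral_const_mul, integral_const_mul]
      ring
  have := discrim_le_zero hquad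
  rw [discrim] at this
  nlinarith

theorem sq_norm_integral_mul_le {T : Type*} [MeasurableSpace T] {ν : Measure T}
    {k w f : T → ℂ} {C c : ℝ} (hk : ∀ t, ‖k t‖ ≤ C) (hw : Integrable w ν)
    (hf : AEStronglyMeasurable f ν) (hfc : ∀ t, ‖f t‖ ≤ c) :
    ‖∫ t, k t * w t * f t ∂ν‖ ^ 2
      ≤ C ^ 2 * ((∫ t, ‖w t‖ ∂ν) * ∫ t, ‖w t‖ * ‖f t‖ ^ 2 ∂ν) := by
  have hwf : Integrable (fun t => ‖w t‖ * ‖f t‖) ν :=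
    hw.norm.mul_bdd hf.norm (ae_of_all _ fun t => by simpa using hfc t)
  have hwf2 : Integrable (fun t => ‖w t‖ * ‖f t‖ ^ 2) ν :=
    hw.norm.mul_bdd (hf.norm.pow 2) (ae_of_all _ fun t => by
      simpa using pow_le_pow_left₀ (norm_nonneg _) (hfc t) 2)
  have hbound : ‖∫ t, k t * w t * f t ∂ν‖ ≤ C * ∫ t, ‖w t‖ * ‖f t‖ ∂ν := by
    rw [← integral_const_mul]
    refine (norm_integral_le_integral_norm _).trans (integral_mono_of_nonneg
      (ae_of_all _ fun t => norm_nonneg _) (hwf.const_mul C) (ae_of_all _ fun t => ?_))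
    simp only [norm_mul, mul_assoc]
    exact mul_le_mul_of_nonneg_right (hk t) (by positivity)
  calc ‖∫ t, k t * w t * f t ∂ν‖ ^ 2 ≤ (C * ∫ t, ‖w t‖ * ‖f t‖ ∂ν) ^ 2 :=
        pow_le_pow_left₀ (norm_nonneg _) hbound 2
    _ = C ^ 2 * (∫ t, ‖w t‖ * ‖f t‖ ∂ν) ^ 2 := mul_pow _ _ _
    _ ≤ _ := by
      gcongr
      exact sq_integral_mul_le_integral_mul_integral_mul_sq_s9
        (ae_of_all _ fun t => norm_nonneg _) hw.norm hwf hwf2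

section DominatedProcess

variable {T Ω : Type*} [MeasurableSpace T] [MeasurableSpace Ω] {ν : Measure T} {μ : Measure Ω}
  [SFinite ν] [SFinite μ] {w : T → ℂ} {D : Ω → T → ℂ} {R : Ω → ℝ} {σ2 : ℝ}

theorem integral_integral_norm_mul_sq_le (hw : Integrable w ν)
    (hD : Measurable (Function.uncurry D)) (hR : MemLp R 2 μ) (hDR : ∀ ω t, ‖D ω t‖ ≤ R ω)
    (hσ : ∀ t, ∫ ω, ‖D ω t‖ ^ 2 ∂μ ≤ σ2) :
    Integrable (fun ω => ∫ t, ‖w t‖ * ‖D ω t‖ ^ 2 ∂ν) μ ∧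
      ∫ ω, ∫ t, ‖w t‖ * ‖D ω t‖ ^ 2 ∂ν ∂μ ≤ σ2 * ∫ t, ‖w t‖ ∂ν := by
  have hprod : Integrable (Function.uncurry fun ω t => ‖w t‖ * ‖D ω t‖ ^ 2) (μ.prod ν) := by
    refine (hR.integrable_sq.mul_prod hw.norm).mono'
      (hw.norm.aestronglyMeasurable.comp_snd.mul (hD.norm.pow_const 2).aestronglyMeasurable)
      (ae_of_all _ fun p => ?_)
    simp only [Function.uncurry, norm_mul, norm_pow, norm_norm]
    rw [mul_comm]
    gcongr
    exact hDR _ _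
  refine ⟨hprod.integral_prod_left, ?_⟩
  rw [integral_integral_swap hprod, ← integral_const_mul]
  refine integral_mono_of_nonneg (ae_of_all _ fun t => by positivity)
    (hw.norm.const_mul σ2) (ae_of_all _ fun t => ?_)
  simp only [integral_const_mul]
  rw [mul_comm]
  exact mul_le_mul_of_nonneg_right (hσ t) (norm_nonneg _)

theorem integral_iSup_sq_norm_integral_le {ι : Type*} {k : ι → T → ℂ} {C : ℝ}
    (hk : ∀ x t, ‖k x t‖ ≤ C) (hw : Integrable w ν) (hD : Measurable (Function.uncurry D))
    (hR : MemLp R 2 μ) (hDR : ∀ ω t, ‖D ω t‖ ≤ R ω) (hσ : ∀ t, ∫ ω, ‖D ω t‖ ^ 2 ∂μ ≤ σ2) :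
    ∫ ω, ⨆ x, ‖∫ t, k x t * w t * D ω t ∂ν‖ ^ 2 ∂μ ≤ C ^ 2 * σ2 * (∫ t, ‖w t‖ ∂ν) ^ 2 := by
  obtain ⟨hF, hFσ⟩ := integral_integral_norm_mul_sq_le hw hD hR hDR hσ
  calc ∫ ω, ⨆ x, ‖∫ t, k x t * w t * D ω t ∂ν‖ ^ 2 ∂μ
      ≤ ∫ ω, C ^ 2 * ((∫ t, ‖w t‖ ∂ν) * ∫ t, ‖w t‖ * ‖D ω t‖ ^ 2 ∂ν) ∂μ := by
        refine integral_mono_of_nonneg (ae_of_all _ fun ω => Real.iSup_nonneg fun x => by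
          positivity) ((hF.const_mul _).const_mul _) (ae_of_all _ fun ω => ?_)
        refine Real.iSup_le (fun x => sq_norm_integral_mul_le (hk x) hw
          (hD.comp measurable_prodMk_left).aestronglyMeasurable (hDR ω)) ?_
        have : 0 ≤ ∫ t, ‖w t‖ * ‖D ω t‖ ^ 2 ∂ν := integral_nonneg fun t => by positivity
        positivity
    _ ≤ C ^ 2 * σ2 * (∫ t, ‖w t‖ ∂ν) ^ 2 := by
      rw [integral_const_mul, integral_const_mul]
      calc C ^ 2 * ((∫ t, ‖w t‖ ∂ν) * ∫ ω, ∫ t, ‖w t‖ * ‖D ω t‖ ^ 2 ∂ν ∂μ)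
          ≤ C ^ 2 * ((∫ t, ‖w t‖ ∂ν) * (σ2 * ∫ t, ‖w t‖ ∂ν)) := by gcongr
        _ = _ := by ring

end DominatedProcess

section MeanOfIndependent

variable {Ω ι : Type*} [MeasurableSpace Ω] {μ : Measure Ω} [IsProbabilityMeasure μ]
  [Fintype ι]

theorem integral_sq_mean_sub_le [Nonempty ι] {X : ι → Ω → ℝ} (hX : ∀ i, MemLp (X i) 2 μ)
    (hind : Pairwise fun i j => IndepFun (X i) (X j) μ) {m : ℝ} (hm : ∀ i, μ[X i] = m) :
    ∫ ω, ((Fintype.card ι : ℝ)⁻¹ * ∑ i, X i ω - m) ^ 2 ∂μ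
      ≤ (Fintype.card ι : ℝ)⁻¹ ^ 2 * ∑ i, ∫ ω, X i ω ^ 2 ∂μ := by
  set c : ℝ := (Fintype.card ι : ℝ)⁻¹
  have hS : MemLp (∑ i, X i) 2 μ := memLp_finsetSum' _ fun i _ => hX i
  have hmean : μ[fun ω => c * (∑ i, X i) ω] = m := by
    simp only [Finset.sum_apply]
    rw [integral_const_mul, integral_finsetSum _ fun i _ => (hX i).integrable one_le_two]
    simp [hm, c]
  calc ∫ ω, (c * ∑ i, X i ω - m) ^ 2 ∂μ = variance (fun ω => c * (∑ i, X i) ω) μ := by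
        rw [variance_eq_integral (hS.const_mul c).aestronglyMeasurable.aemeasurable, hmean]
        simp
    _ = c ^ 2 * ∑ i, variance (X i) μ := by
        rw [variance_const_mul, IndepFun.variance_sum (fun i _ => hX i)
          fun i _ j _ hij => hind hij]
    _ ≤ c ^ 2 * ∑ i, ∫ ω, X i ω ^ 2 ∂μ := by
        gcongr with i
        exact variance_le_expectation_sq (hX i).aestronglyMeasurable

theorem integral_norm_sq_mean_sub_le [Nonempty ι] {X : ι → Ω → ℂ} (hX : ∀ i, MemLp (X i) 2 μ)
    (hind : Pairwise fun i j => IndepFun (X i) (X j) μ) {m : ℂ} (hm : ∀ i, μ[X i] = m) :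
    ∫ ω, ‖(Fintype.card ι : ℂ)⁻¹ * ∑ i, X i ω - m‖ ^ 2 ∂μ
      ≤ (Fintype.card ι : ℝ)⁻¹ ^ 2 * ∑ i, ∫ ω, ‖X i ω‖ ^ 2 ∂μ := by
  set c : ℝ := (Fintype.card ι : ℝ)⁻¹
  have hXre : ∀ i, MemLp (fun ω => (X i ω).re) 2 μ := fun i => (hX i).re
  have hXim : ∀ i, MemLp (fun ω => (X i ω).im) 2 μ := fun i => (hX i).im
  have hre := integral_sq_mean_sub_le hXre
    (fun i j hij => (hind hij).comp Complex.measurable_re Complex.measurable_re)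
    (m := m.re) fun i => by rw [← hm i]; exact integral_re ((hX i).integrable one_le_two)
  have him := integral_sq_mean_sub_le hXim
    (fun i j hij => (hind hij).comp Complex.measurable_im Complex.measurable_im)
    (m := m.im) fun i => by rw [← hm i]; exact integral_im ((hX i).integrable one_le_two)
  have hsplit : ∀ ω, ‖(Fintype.card ι : ℂ)⁻¹ * ∑ i, X i ω - m‖ ^ 2
      = (c * ∑ i, (X i ω).re - m.re) ^ 2 + (c * ∑ i, (X i ω).im - m.im) ^ 2 := fun ω => by
    have hc : (Fintype.card ι : ℂ)⁻¹ = (c : ℂ) := by simp only [c, Complex.ofReal_inv,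
      Complex.ofReal_natCast]
    rw [Complex.sq_norm, Complex.normSq_apply, hc]
    simp only [Complex.sub_re, Complex.sub_im, Complex.re_ofReal_mul, Complex.im_ofReal_mul,
      Complex.re_sum, Complex.im_sum]
    ring
  have hdevre : Integrable (fun ω => (c * ∑ i, (X i ω).re - m.re) ^ 2) μ :=
    (((memLp_finsetSum _ fun i _ => hXre i).const_mul c).sub (memLp_const _)).integrable_sq
  have hdevim : Integrable (fun ω => (c * ∑ i, (X i ω).im - m.im) ^ 2) μ :=
    (((memLp_finsetSum _ fun i _ => hXim i).const_mul c).sub (memLp_const _)).integrable_sq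
  have hsq : ∀ i, ∫ ω, ‖X i ω‖ ^ 2 ∂μ = ∫ ω, (X i ω).re ^ 2 ∂μ + ∫ ω, (X i ω).im ^ 2 ∂μ :=
    fun i => by
      rw [← integral_add (hXre i).integrable_sq (hXim i).integrable_sq]
      congr with ω
      rw [Complex.sq_norm, Complex.normSq_apply]
      ring
  rw [integral_congr_ae (ae_of_all _ hsplit), integral_add hdevre hdevim]
  simp only [hsq, Finset.sum_add_distrib, mul_add]
  exact add_le_add hre him

theorem integral_norm_sq_mean_comp_sub_le {E : Type*} [MeasurableSpace E] {P : ι → Ω → E}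
    (hind : Pairwise fun i j => IndepFun (P i) (P j) μ) {i₀ : ι}
    (hident : ∀ i, IdentDistrib (P i) (P i₀) μ μ) {f : E → ℂ} (hf : Measurable f)
    (hf2 : MemLp (fun ω => f (P i₀ ω)) 2 μ) :
    ∫ ω, ‖(Fintype.card ι : ℂ)⁻¹ * ∑ i, f (P i ω) - ∫ ω, f (P i₀ ω) ∂μ‖ ^ 2 ∂μ
      ≤ (Fintype.card ι : ℝ)⁻¹ * ∫ ω, ‖f (P i₀ ω)‖ ^ 2 ∂μ := by
  have : Nonempty ι := ⟨i₀⟩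
  calc _ ≤ (Fintype.card ι : ℝ)⁻¹ ^ 2 * ∑ i, ∫ ω, ‖f (P i ω)‖ ^ 2 ∂μ :=
        integral_norm_sq_mean_sub_le (X := fun i ω => f (P i ω))
          (fun i => ((hident i).comp hf).memLp_iff.2 hf2) (fun i j hij => (hind hij).comp hf hf)
          (fun i => ((hident i).comp hf).integral_eq)
    _ = (Fintype.card ι : ℝ)⁻¹ * ∫ ω, ‖f (P i₀ ω)‖ ^ 2 ∂μ := by
        have : (Fintype.card ι : ℝ) ≠ 0 := Nat.cast_ne_zero.2 Fintype.card_ne_zero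
        have hsame : ∀ i, ∫ ω, ‖f (P i ω)‖ ^ 2 ∂μ = ∫ ω, ‖f (P i₀ ω)‖ ^ 2 ∂μ :=
          fun i => ((hident i).comp (hf.norm.pow_const 2)).integral_eq
        simp only [hsame, Finset.sum_const, Finset.card_univ, nsmul_eq_mul]
        field_simp

end MeanOfIndependent

noncomputable def weightedCharTerm (t : ℝ) (p : ℝ × ℝ) : ℂ :=
  p.2 * Complex.exp (Complex.I * t * p.1)

theorem norm_weightedCharTerm (t : ℝ) (p : ℝ × ℝ) : ‖weightedCharTerm t p‖ = |p.2| := by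
  rw [weightedCharTerm, norm_mul, Complex.norm_real, Real.norm_eq_abs, Complex.norm_exp]
  simp

theorem measurable_uncurry_weightedCharTerm :
    Measurable (Function.uncurry weightedCharTerm) := by
  unfold weightedCharTerm Function.uncurry
  fun_prop

theorem measurable_weightedCharTerm (t : ℝ) : Measurable (weightedCharTerm t) :=
  measurable_uncurry_weightedCharTerm.comp measurable_prodMk_left

section WeightedCharTerm

variable {Ω : Type*} [MeasurableSpace Ω] {μ : Measure Ω} {n : ℕ}

theorem norm_mean_weightedCharTerm_le (p : Fin n → ℝ × ℝ) (t : ℝ) :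
    ‖(n : ℂ)⁻¹ * ∑ i, weightedCharTerm t (p i)‖ ≤ (n : ℝ)⁻¹ * ∑ i, |(p i).2| := by
  rw [norm_mul, norm_inv, Complex.norm_natCast]
  gcongr
  exact (norm_sum_le _ _).trans_eq (by simp only [norm_weightedCharTerm])

theorem norm_integral_weightedCharTerm_le (P : Ω → ℝ × ℝ) (t : ℝ) :
    ‖∫ ω, weightedCharTerm t (P ω) ∂μ‖ ≤ ∫ ω, |(P ω).2| ∂μ :=
  (norm_integral_le_integral_norm _).trans_eq (by simp only [norm_weightedCharTerm])

theorem measurable_uncurry_mean_weightedCharTerm {P : Fin n → Ω → ℝ × ℝ}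
    (hP : ∀ i, Measurable (P i)) :
    Measurable (Function.uncurry fun ω t => (n : ℂ)⁻¹ * ∑ i, weightedCharTerm t (P i ω)) :=
  (Finset.measurable_sum _ fun i _ => measurable_uncurry_weightedCharTerm.comp
    (measurable_snd.prodMk ((hP i).comp measurable_fst))).const_mul _

theorem measurable_integral_weightedCharTerm [SFinite μ] {P : Ω → ℝ × ℝ} (hP : Measurable P) :
    Measurable fun t => ∫ ω, weightedCharTerm t (P ω) ∂μ :=
  (measurable_uncurry_weightedCharTerm.comp (measurable_fst.prodMk
    (hP.comp measurable_snd))).stronglyMeasurable.integral_prod_right'.measurable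

theorem integral_norm_sq_mean_weightedCharTerm_sub_le [IsProbabilityMeasure μ]
    {P : Fin n → Ω → ℝ × ℝ} (hind : iIndepFun P μ) {i₀ : Fin n}
    (hident : ∀ i, IdentDistrib (P i) (P i₀) μ μ) (hP : Measurable (P i₀))
    (hP2 : Integrable (fun ω => (P i₀ ω).2 ^ 2) μ) (t : ℝ) :
    ∫ ω, ‖(n : ℂ)⁻¹ * ∑ i, weightedCharTerm t (P i ω)
        - ∫ ω, weightedCharTerm t (P i₀ ω) ∂μ‖ ^ 2 ∂μ
      ≤ (n : ℝ)⁻¹ * ∫ ω, (P i₀ ω).2 ^ 2 ∂μ := by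
  have hnorm : ∀ ω, ‖weightedCharTerm t (P i₀ ω)‖ ^ 2 = (P i₀ ω).2 ^ 2 := fun ω => by
    rw [norm_weightedCharTerm, sq_abs]
  have hL2 : MemLp (fun ω => weightedCharTerm t (P i₀ ω)) 2 μ :=
    (memLp_two_iff_integrable_sq_norm ((measurable_weightedCharTerm t).comp
      hP).aestronglyMeasurable).2 (by simpa only [Function.comp_apply, hnorm] using hP2)
  simpa only [Fintype.card_fin, hnorm] using integral_norm_sq_mean_comp_sub_le
    (fun i j hij => hind.indepFun hij) hident (measurable_weightedCharTerm t) hL2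

end WeightedCharTerm

theorem norm_cexp_neg_I_mul_mul (t x : ℝ) : ‖Complex.exp (-(Complex.I * t * x))‖ = 1 := by
  rw [Complex.norm_exp]
  simp

theorem integrable_cexp_mul_mul_div {φ ψ u : ℝ → ℂ} (hφψ : Integrable (fun t => φ t / ψ t))
    (hu : AEStronglyMeasurable u) {C : ℝ} (huC : ∀ t, ‖u t‖ ≤ C) (x : ℝ) :
    Integrable (fun t : ℝ => Complex.exp (-(Complex.I * t * x)) * φ t * u t / ψ t) := by
  have he : AEStronglyMeasurable (fun t : ℝ => Complex.exp (-(Complex.I * t * x)) * u t) := by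
    fun_prop
  refine (hφψ.bdd_mul (c := C) he (ae_of_all _ fun t => ?_)).congr
    (ae_of_all _ fun t => by ring)
  rw [norm_mul, norm_cexp_neg_I_mul_mul, one_mul]
  exact huC t

theorem mul_integral_sub_mul_integral_cexp_mul_mul_div {φ ψ u v : ℝ → ℂ}
    (hφψ : Integrable (fun t => φ t / ψ t)) (hu : AEStronglyMeasurable u)
    (hv : AEStronglyMeasurable v) {Cu Cv : ℝ} (huC : ∀ t, ‖u t‖ ≤ Cu) (hvC : ∀ t, ‖v t‖ ≤ Cv)
    (c : ℂ) (x : ℝ) :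
    (c * ∫ t : ℝ, Complex.exp (-(Complex.I * t * x)) * φ t * u t / ψ t)
      - c * ∫ t : ℝ, Complex.exp (-(Complex.I * t * x)) * φ t * v t / ψ t
      = ∫ t : ℝ, c * Complex.exp (-(Complex.I * t * x)) * (φ t / ψ t) * (u t - v t) := by
  rw [← mul_sub, ← integral_sub (integrable_cexp_mul_mul_div hφψ hu huC x)
    (integrable_cexp_mul_mul_div hφψ hv hvC x), ← integral_const_mul]
  congr with t
  ring

theorem stmt_9_general {Ω : Type*} [MeasureSpace Ω] [IsProbabilityMeasure (ℙ : Measure Ω)]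
    (n : ℕ) (hn : 1 ≤ n) (Y Z : Fin n → Ω → ℝ)
    (hmeas : ∀ i, Measurable (fun ω => (Y i ω, Z i ω)))
    (hindep : iIndepFun (fun i => fun ω => (Y i ω, Z i ω)) ℙ)
    (hident : ∀ i j, IdentDistrib (fun ω => (Y i ω, Z i ω)) (fun ω => (Y j ω, Z j ω)) ℙ ℙ)
    (hZ2 : Integrable (fun ω => (Z ⟨0, hn⟩ ω) ^ 2) ℙ)
    (φK : ℝ → ℂ) (φε : ℝ → ℂ) (h : ℝ)
    (hint : Integrable (fun t : ℝ => φK (t * h) / φε t))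
    (rhat : Ω → ℝ → ℂ)
    (hrhat : ∀ ω x, rhat ω x =
      ((2 * Real.pi : ℝ) : ℂ)⁻¹ *
        ∫ t : ℝ, Complex.exp (-(Complex.I * t * x)) * φK (t * h) *
          ((n : ℂ)⁻¹ * ∑ i, (Z i ω : ℂ) * Complex.exp (Complex.I * t * Y i ω)) / φε t)
    (Er : ℝ → ℂ)
    (hEr : ∀ x, Er x =
      ((2 * Real.pi : ℝ) : ℂ)⁻¹ *
        ∫ t : ℝ, Complex.exp (-(Complex.I * t * x)) * φK (t * h) *
          (∫ ω, (Z ⟨0, hn⟩ ω : ℂ) * Complex.exp (Complex.I * t * Y ⟨0, hn⟩ ω) ∂ℙ) / φε t) :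
    (∫ ω, (⨆ x : ℝ, ‖rhat ω x - Er x‖ ^ 2) ∂ℙ)
      ≤ ((2 * Real.pi) ^ 2)⁻¹ * (n : ℝ)⁻¹ * (∫ ω, (Z ⟨0, hn⟩ ω) ^ 2 ∂ℙ)
          * (∫ t : ℝ, ‖φK (t * h)‖ / ‖φε t‖) ^ 2 := by
  set P : Fin n → Ω → ℝ × ℝ := fun i ω => (Y i ω, Z i ω)
  set i₀ : Fin n := ⟨0, hn⟩
  set S : Ω → ℝ → ℂ := fun ω t => (n : ℂ)⁻¹ * ∑ i, weightedCharTerm t (P i ω)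
  set m : ℝ → ℂ := fun t => ∫ ω, weightedCharTerm t (P i₀ ω)
  have hS : Measurable (Function.uncurry S) := measurable_uncurry_mean_weightedCharTerm hmeas
  have hm : Measurable m := measurable_integral_weightedCharTerm (hmeas i₀)
  have hdiff : ∀ ω x, rhat ω x - Er x = ∫ t : ℝ, ((2 * Real.pi : ℝ) : ℂ)⁻¹ *
      Complex.exp (-(Complex.I * t * x)) * (φK (t * h) / φε t) * (S ω t - m t) :=
    fun ω x => by
      rw [hrhat, hEr]
      exact mul_integral_sub_mul_integral_cexp_mul_mul_div (u := S ω) (v := m) hint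
        (hS.comp measurable_prodMk_left).aestronglyMeasurable hm.aestronglyMeasurable
        (fun t => norm_mean_weightedCharTerm_le (P · ω) t)
        (norm_integral_weightedCharTerm_le (P i₀)) _ x
  have hZ : ∀ i, MemLp (Z i) 2 := fun i => ((hident i i₀).comp measurable_snd).memLp_iff.2
    ((memLp_two_iff_integrable_sq ((hmeas i₀).snd).aestronglyMeasurable).2 hZ2)
  have hR : MemLp (fun ω => (n : ℝ)⁻¹ * ∑ i, |Z i ω| + ∫ ω, |Z i₀ ω|) 2 :=
    ((memLp_finsetSum _ fun i _ => (hZ i).abs).const_mul _).add (memLp_const _)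
  have hk : ∀ x t : ℝ, ‖((2 * Real.pi : ℝ) : ℂ)⁻¹ * Complex.exp (-(Complex.I * t * x))‖
      ≤ (2 * Real.pi)⁻¹ := fun x t => by
    rw [norm_mul, norm_cexp_neg_I_mul_mul, mul_one, norm_inv, Complex.norm_real,
      Real.norm_of_nonneg (by positivity)]
  calc ∫ ω, ⨆ x : ℝ, ‖rhat ω x - Er x‖ ^ 2
      = ∫ ω, ⨆ x : ℝ, ‖∫ t : ℝ, ((2 * Real.pi : ℝ) : ℂ)⁻¹ * Complex.exp (-(Complex.I * t * x))
          * (φK (t * h) / φε t) * (S ω t - m t)‖ ^ 2 := by simp only [hdiff]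
    _ ≤ ((2 * Real.pi)⁻¹) ^ 2 * ((n : ℝ)⁻¹ * ∫ ω, Z i₀ ω ^ 2)
          * (∫ t : ℝ, ‖φK (t * h) / φε t‖) ^ 2 :=
        integral_iSup_sq_norm_integral_le hk hint (hS.sub (hm.comp measurable_snd)) hR
          (fun ω t => (norm_sub_le _ _).trans (add_le_add (norm_mean_weightedCharTerm_le _ t)
            (norm_integral_weightedCharTerm_le _ t)))
          (integral_norm_sq_mean_weightedCharTerm_sub_le hindep (fun i => hident i i₀)
            (hmeas i₀) hZ2)
    _ = _ := by simp only [norm_div, inv_pow]; ring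

/-- For i.i.d. pairs `(Y_i, Z_i)` with `E[Z₁²] < ∞`, continuous
nowhere-vanishing `φ_ε`, integrable `K` with Fourier transform `φ_K`, `h > 0`, and
`t ↦ φ_K(th)/φ_ε(t)` integrable, the numerator estimator
`r̂(x) = (2π)⁻¹ ∫ exp(−itx) φ_K(th) (n⁻¹ ∑ Z_i exp(itY_i))/φ_ε(t) dt` satisfies
`E[sup_x |r̂(x) − E r̂(x)|²] ≤ (2π)⁻² n⁻¹ E[Z₁²] (∫ |φ_K(th)|/|φ_ε(t)| dt)²`. -/
theorem stmt_9 {Ω : Type*} [MeasureSpace Ω] [IsProbabilityMeasure (ℙ : Measure Ω)]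
    (n : ℕ) (hn : 1 ≤ n) (Y Z : Fin n → Ω → ℝ)
    (hmeas : ∀ i, Measurable (fun ω => (Y i ω, Z i ω)))
    (hindep : iIndepFun (fun i => fun ω => (Y i ω, Z i ω)) ℙ)
    (hident : ∀ i j, IdentDistrib (fun ω => (Y i ω, Z i ω)) (fun ω => (Y j ω, Z j ω)) ℙ ℙ)
    (hZ2 : Integrable (fun ω => (Z ⟨0, hn⟩ ω) ^ 2) ℙ)
    (K : ℝ → ℝ) (hK : Integrable K)
    (φK : ℝ → ℂ) (hφK : ∀ t : ℝ, φK t = ∫ x : ℝ, Complex.exp (Complex.I * t * x) * K x)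
    (φε : ℝ → ℂ) (hφεc : Continuous φε) (hφε0 : ∀ t, φε t ≠ 0)
    (h : ℝ) (hh : 0 < h)
    (hint : Integrable (fun t : ℝ => φK (t * h) / φε t))
    (rhat : Ω → ℝ → ℂ)
    (hrhat : ∀ ω x, rhat ω x =
      ((2 * Real.pi : ℝ) : ℂ)⁻¹ *
        ∫ t : ℝ, Complex.exp (-(Complex.I * t * x)) * φK (t * h) *
          ((n : ℂ)⁻¹ * ∑ i, (Z i ω : ℂ) * Complex.exp (Complex.I * t * Y i ω)) / φε t)
    (Er : ℝ → ℂ)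
    (hEr : ∀ x, Er x =
      ((2 * Real.pi : ℝ) : ℂ)⁻¹ *
        ∫ t : ℝ, Complex.exp (-(Complex.I * t * x)) * φK (t * h) *
          (∫ ω, (Z ⟨0, hn⟩ ω : ℂ) * Complex.exp (Complex.I * t * Y ⟨0, hn⟩ ω) ∂ℙ) / φε t) :
    (∫ ω, (⨆ x : ℝ, ‖rhat ω x - Er x‖ ^ 2) ∂ℙ)
      ≤ ((2 * Real.pi) ^ 2)⁻¹ * (n : ℝ)⁻¹ * (∫ ω, (Z ⟨0, hn⟩ ω) ^ 2 ∂ℙ)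
          * (∫ t : ℝ, ‖φK (t * h)‖ / ‖φε t‖) ^ 2 :=
  stmt_9_general n hn Y Z hmeas hindep hident hZ2 φK φε h hint rhat hrhat Er hEr
end

section
/- Let p, n be positive integers with κ = p/n ∈ (0,1). Let a, ã, r̂, r̃ > 0 be real numbers and v̂₀ ∈ ℝ with v̂₀ ≠ 0. Define σ̂₀² = κ r̂² / (n v̂₀²), μ̂₀² = a²/n − (1−κ) σ̂₀², σ̃² = κ r̃² / (n (1−κ)²), μ̃² = ã²/n − (1−κ) σ̃², and assume μ̂₀² > 0 and μ̃² > 0. Then σ̂₀²/μ̂₀² < σ̃²/μ̃² if and only if (a/ã) · (|v̂₀|/(1−κ)) · (r̃/r̂) > 1. -/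
/-! Cross-multiplying, the common term `(1 - κ) σ̂₀² σ̃²` cancels, so the comparison of the two
ratios reduces to `σ̂₀² ã² < σ̃² a²`, i.e. to `(ã (1 - κ) r̂)² < (a v̂₀ r̃)²`. -/

theorem div_sub_mul_lt_div_sub_mul_iff {α : Type*} [Field α] [LinearOrder α]
    [IsStrictOrderedRing α] {s s' A A' c : α} (h : 0 < A - c * s) (h' : 0 < A' - c * s') :
    s / (A - c * s) < s' / (A' - c * s') ↔ s * A' < s' * A := by
  rw [div_lt_div_iff₀ h h', ← sub_neg, ← sub_neg (a := s * A')]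
  ring_nf

theorem stmt_12_general (n : ℕ) (hn : 0 < n)
    (κ : ℝ) (hκpos : 0 < κ) (hκlt : κ < 1)
    (a aTil rHat rTil : ℝ)
    (ha : 0 < a) (haTil : 0 < aTil) (hrHat : 0 < rHat) (hrTil : 0 < rTil)
    (v0 : ℝ) (hv0 : v0 ≠ 0)
    (σHat2 μHat2 σTil2 μTil2 : ℝ)
    (hσHat2 : σHat2 = κ * rHat ^ 2 / (n * v0 ^ 2))
    (hμHat2 : μHat2 = a ^ 2 / n - (1 - κ) * σHat2)
    (hσTil2 : σTil2 = κ * rTil ^ 2 / (n * (1 - κ) ^ 2))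
    (hμTil2 : μTil2 = aTil ^ 2 / n - (1 - κ) * σTil2)
    (hμHat2pos : 0 < μHat2) (hμTil2pos : 0 < μTil2) :
    σHat2 / μHat2 < σTil2 / μTil2 ↔
      1 < (a / aTil) * (|v0| / (1 - κ)) * (rTil / rHat) := by
  subst hμHat2 hμTil2
  have hn' : (0 : ℝ) < n := Nat.cast_pos.mpr hn
  have h1κ : 0 < 1 - κ := sub_pos.mpr hκlt
  have hC : 0 < κ / ((n : ℝ) ^ 2 * v0 ^ 2 * (1 - κ) ^ 2) := by positivity
  have hHat : σHat2 * (aTil ^ 2 / n)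
      = κ / ((n : ℝ) ^ 2 * v0 ^ 2 * (1 - κ) ^ 2) * (aTil * (1 - κ) * rHat) ^ 2 := by
    subst hσHat2; field_simp
  have hTil : σTil2 * (a ^ 2 / n)
      = κ / ((n : ℝ) ^ 2 * v0 ^ 2 * (1 - κ) ^ 2) * (a * v0 * rTil) ^ 2 := by
    subst hσTil2; field_simp
  rw [div_sub_mul_lt_div_sub_mul_iff hμHat2pos hμTil2pos, hHat, hTil, mul_lt_mul_iff_right₀ hC,
    sq_lt_sq, abs_of_pos (by positivity), abs_mul, abs_mul, abs_of_pos ha, abs_of_pos hrTil,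
    div_mul_div_comm, div_mul_div_comm, one_lt_div (by positivity)]

/-- Efficiency comparison for the unregularized estimator versus the
least-squares pilot. With `κ = p/n ∈ (0,1)`, `σ̂₀² = κ r̂²/(n v̂₀²)`,
`μ̂₀² = a²/n − (1−κ) σ̂₀²`, `σ̃² = κ r̃²/(n (1−κ)²)`, `μ̃² = ã²/n − (1−κ) σ̃²`
(both `μ̂₀², μ̃² > 0`), one has `σ̂₀²/μ̂₀² < σ̃²/μ̃²` iff
`(a/ã)·(|v̂₀|/(1−κ))·(r̃/r̂) > 1`. -/
theorem stmt_12 (p n : ℕ) (hp : 0 < p) (hn : 0 < n)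
    (κ : ℝ) (hκ : κ = (p : ℝ) / n) (hκpos : 0 < κ) (hκlt : κ < 1)
    (a aTil rHat rTil : ℝ)
    (ha : 0 < a) (haTil : 0 < aTil) (hrHat : 0 < rHat) (hrTil : 0 < rTil)
    (v0 : ℝ) (hv0 : v0 ≠ 0)
    (σHat2 μHat2 σTil2 μTil2 : ℝ)
    (hσHat2 : σHat2 = κ * rHat ^ 2 / (n * v0 ^ 2))
    (hμHat2 : μHat2 = a ^ 2 / n - (1 - κ) * σHat2)
    (hσTil2 : σTil2 = κ * rTil ^ 2 / (n * (1 - κ) ^ 2))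
    (hμTil2 : μTil2 = aTil ^ 2 / n - (1 - κ) * σTil2)
    (hμHat2pos : 0 < μHat2) (hμTil2pos : 0 < μTil2) :
    σHat2 / μHat2 < σTil2 / μTil2 ↔
      1 < (a / aTil) * (|v0| / (1 - κ)) * (rTil / rHat) :=
  stmt_12_general n hn κ hκpos hκlt a aTil rHat rTil ha haTil hrHat hrTil v0 hv0 σHat2 μHat2 σTil2
    μTil2 hσHat2 hμHat2 hσTil2 hμTil2 hμHat2pos hμTil2pos
end
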